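/- Let M be a countably based semigroup in the category Cu having the Riesz interpolation property, and let X be a compact metric space of finite covering dimension. Then Lsc(X,M), the semigroup of lower semicontinuous M-valued functions on X with pointwise order and addition, has the Riesz interpolation property. -/

import Mathlib

noncomputable section

set_option maxHeartbeats 1000000

/-- `a` is compactly contained in `b`: for every increasing sequence having a supremum
which dominates `b`, some term already dominates `a`. -/
def CompactlyContained {M : Type*} [Preorder M] (a b : M) : Prop :=
  ∀ c : ℕ → M, Monotone c → ∀ s : M, IsLUB (Set.range c) s → b ≤ s → ∃ n, a ≤ c n

/-- The Riesz interpolation property. -/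
def RieszInterpolation (M : Type*) [Preorder M] : Prop :=
  ∀ a₁ a₂ b₁ b₂ : M, a₁ ≤ b₁ → a₁ ≤ b₂ → a₂ ≤ b₁ → a₂ ≤ b₂ →
    ∃ c : M, a₁ ≤ c ∧ a₂ ≤ c ∧ c ≤ b₁ ∧ c ≤ b₂
/-- Covering dimension at most `n`: every finite open cover has a finite open refinement
covering `X` in which each point lies in at most `n + 1` members. -/
def CoveringDimLE (X : Type*) [TopologicalSpace X] (n : ℕ) : Prop :=
  ∀ 𝒰 : Finset (Set X), (∀ U ∈ 𝒰, IsOpen U) → ⋃₀ (𝒰 : Set (Set X)) = Set.univ →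
    ∃ 𝒱 : Finset (Set X), (∀ V ∈ 𝒱, IsOpen V) ∧ ⋃₀ (𝒱 : Set (Set X)) = Set.univ ∧
      (∀ V ∈ 𝒱, ∃ U ∈ 𝒰, V ⊆ U) ∧
      ∀ x : X, Set.ncard {V : Set X | V ∈ 𝒱 ∧ x ∈ V} ≤ n + 1

/-- A partially ordered abelian semigroup is in the category `Cu` if increasing sequences
have suprema, every element is the supremum of a rapidly increasing sequence, suprema of
increasing sequences are additive, and `≪` is additive. -/
def IsCuSemigroup (M : Type*) [AddCommSemigroup M] [PartialOrder M]
    [CovariantClass M M (· + ·) (· ≤ ·)] : Prop :=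
  (∀ c : ℕ → M, Monotone c → ∃ s : M, IsLUB (Set.range c) s) ∧
  (∀ a : M, ∃ x : ℕ → M, (∀ n, CompactlyContained (x n) (x (n + 1))) ∧
    IsLUB (Set.range x) a) ∧
  (∀ (c d : ℕ → M) (s t : M), Monotone c → Monotone d →
    IsLUB (Set.range c) s → IsLUB (Set.range d) t →
    IsLUB (Set.range fun n => c n + d n) (s + t)) ∧
  (∀ a b a' b' : M, CompactlyContained a b → CompactlyContained a' b' →
    CompactlyContained (a + a') (b + b'))


/-- The semigroup of lower semicontinuous `M`-valued functions on `X`, with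
pointwise order. -/
def LscFun (X : Type*) [TopologicalSpace X] (M : Type*) [Preorder M] :=
  {f : X → M // ∀ a : M, IsOpen {t : X | CompactlyContained a (f t)}}

instance (X : Type*) [TopologicalSpace X] (M : Type*) [PartialOrder M] :
    PartialOrder (LscFun X M) :=
  Subtype.partialOrder _

/-!
Riesz interpolation and countable basedness give pointwise meets: the lower bounds of
`g₁ t` and `g₂ t` form a directed set, and in a countably based semigroup every nonempty
directed set has a supremum, which is then the infimum `g₁ t ⊓ g₂ t`. This pointwise meet is
again lower semicontinuous, because `≪` interpolates, and it interpolates between the `fᵢ`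
and the `gⱼ`.
-/

section CompactlyContained

variable {M : Type*} [Preorder M]

theorem CompactlyContained.mono {a' a b b' : M} (ha : a' ≤ a) (h : CompactlyContained a b)
    (hb : b ≤ b') : CompactlyContained a' b' := by
  intro c hc s hs hbs
  obtain ⟨n, hn⟩ := h c hc s hs (hb.trans hbs)
  exact ⟨n, ha.trans hn⟩

theorem CompactlyContained.le {a b : M} (h : CompactlyContained a b) : a ≤ b := by
  obtain ⟨n, hn⟩ := h (fun _ => b) monotone_const b
    (by rw [Set.range_const]; exact isLUB_singleton) le_rfl
  exact hn

theorem CompactlyContained.exists_between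
    (hrapid : ∀ a : M, ∃ x : ℕ → M, (∀ n, CompactlyContained (x n) (x (n + 1))) ∧
      IsLUB (Set.range x) a)
    {a b : M} (h : CompactlyContained a b) :
    ∃ c, CompactlyContained a c ∧ CompactlyContained c b := by
  obtain ⟨x, hx, hxb⟩ := hrapid b
  obtain ⟨k, hak⟩ := h x (monotone_nat_of_le_succ fun n => (hx n).le) b hxb le_rfl
  exact ⟨x (k + 1), (hx k).mono hak le_rfl, (hx (k + 1)).mono le_rfl (hxb.1 ⟨k + 2, rfl⟩)⟩

end CompactlyContained

theorem DirectedOn.exists_monotone_seq_ge {α : Type*} [Preorder α] {S : Set α}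
    (hS : DirectedOn (· ≤ ·) S) (u : ℕ → α) (hu : ∀ k, ∃ s ∈ S, u k ≤ s) :
    ∃ c : ℕ → α, Monotone c ∧ (∀ k, c k ∈ S) ∧ ∀ k, u k ≤ c k := by
  choose s hsS hus using hu
  choose! ub hubS hub₁ hub₂ using hS
  let c : ℕ → α := fun n => Nat.rec (s 0) (fun k ck => ub ck (s (k + 1))) n
  have hcS : ∀ k, c k ∈ S := by
    intro k
    induction k with
    | zero => exact hsS 0
    | succ k ih => exact hubS _ ih _ (hsS _)
  refine ⟨c, monotone_nat_of_le_succ fun k => hub₁ _ (hcS k) _ (hsS _), hcS, ?_⟩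
  rintro (_ | k)
  · exact hus 0
  · exact (hus _).trans (hub₂ _ (hcS k) _ (hsS _))

/-- The supremum of a monotone sequence in `S` dominating the countably many elements of `D`
that lie below some element of `S` is the supremum of `S`. -/
theorem DirectedOn.exists_isLUB_of_countable {M : Type*} [Preorder M]
    (hsup : ∀ c : ℕ → M, Monotone c → ∃ s, IsLUB (Set.range c) s)
    {D : Set M} (hD : D.Countable)
    (hDsup : ∀ a : M, ∃ x : ℕ → M, (∀ n, x n ∈ D) ∧ IsLUB (Set.range x) a)
    {S : Set M} (hS : DirectedOn (· ≤ ·) S) (hne : S.Nonempty) : ∃ m, IsLUB S m := by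
  set E : Set M := {d ∈ D | ∃ s ∈ S, d ≤ s}
  have hmemE : ∀ s ∈ S, ∀ x : ℕ → M, (∀ n, x n ∈ D) → IsLUB (Set.range x) s → ∀ n, x n ∈ E :=
    fun s hs x hxD hx n => ⟨hxD n, s, hs, hx.1 ⟨n, rfl⟩⟩
  obtain ⟨s₀, hs₀⟩ := hne
  obtain ⟨x₀, hx₀D, hx₀⟩ := hDsup s₀
  obtain ⟨e, he⟩ := (hD.mono fun _ hd => hd.1).exists_eq_range
    ⟨x₀ 0, hmemE s₀ hs₀ x₀ hx₀D hx₀ 0⟩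
  obtain ⟨c, hc, hcS, hec⟩ := hS.exists_monotone_seq_ge e fun k =>
    (show e k ∈ E from he ▸ Set.mem_range_self k).2
  obtain ⟨m, hm⟩ := hsup c hc
  refine ⟨m, fun s hs => ?_, fun u hu => hm.2 ?_⟩
  · obtain ⟨x, hxD, hx⟩ := hDsup s
    refine hx.2 ?_
    rintro _ ⟨n, rfl⟩
    obtain ⟨j, hj⟩ := he ▸ hmemE s hs x hxD hx n
    exact hj ▸ (hec j).trans (hm.1 ⟨j, rfl⟩)
  · rintro _ ⟨k, rfl⟩
    exact hu (hcS k)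

theorem mem_lowerBounds_pair {α : Type*} [Preorder α] {a b c : α} :
    c ∈ lowerBounds {a, b} ↔ c ≤ a ∧ c ≤ b := by
  simp only [lowerBounds_insert, lowerBounds_singleton, Set.mem_inter_iff, Set.mem_Iic]

theorem RieszInterpolation.directedOn_lowerBounds {M : Type*} [Preorder M]
    (hM : RieszInterpolation M) (a b : M) : DirectedOn (· ≤ ·) (lowerBounds {a, b}) := by
  intro x hx y hy
  rw [mem_lowerBounds_pair] at hx hy
  obtain ⟨c, hxc, hyc, hca, hcb⟩ := hM x y a b hx.1 hx.2 hy.1 hy.2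
  exact ⟨c, mem_lowerBounds_pair.2 ⟨hca, hcb⟩, hxc, hyc⟩

theorem isOpen_compactlyContained_of_isGLB {X M : Type*} [TopologicalSpace X] [Preorder M]
    (hinterp : ∀ a b : M, CompactlyContained a b →
      ∃ c, CompactlyContained a c ∧ CompactlyContained c b)
    {f g h : X → M} (hf : ∀ a, IsOpen {t | CompactlyContained a (f t)})
    (hg : ∀ a, IsOpen {t | CompactlyContained a (g t)}) (hh : ∀ t, IsGLB {f t, g t} (h t))
    (a : M) : IsOpen {t | CompactlyContained a (h t)} := by
  rw [isOpen_iff_forall_mem_open]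
  intro t₀ ht₀
  obtain ⟨c, hac, hch⟩ := hinterp _ _ ht₀
  have hbound : ∀ t, h t ≤ f t ∧ h t ≤ g t := fun t => mem_lowerBounds_pair.1 (hh t).1
  refine ⟨{t | CompactlyContained c (f t)} ∩ {t | CompactlyContained c (g t)}, ?_,
    (hf c).inter (hg c), hch.mono le_rfl (hbound t₀).1, hch.mono le_rfl (hbound t₀).2⟩
  rintro t ⟨hcf, hcg⟩
  exact hac.mono le_rfl ((hh t).2 (mem_lowerBounds_pair.2 ⟨hcf.le, hcg.le⟩))

theorem stmt13_general {M : Type*} [AddCommSemigroup M] [PartialOrder M]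
    [CovariantClass M M (· + ·) (· ≤ ·)] (hCu : IsCuSemigroup M)
    (hcb : ∃ D : Set M, D.Countable ∧ ∀ a : M, ∃ x : ℕ → M, (∀ n, x n ∈ D) ∧
      (∀ n, CompactlyContained (x n) (x (n + 1))) ∧ IsLUB (Set.range x) a)
    (hM : RieszInterpolation M)
    (X : Type*) [MetricSpace X] (n : ℕ) :
    RieszInterpolation (LscFun X M) := by
  obtain ⟨hsup, hrapid, -⟩ := hCu
  obtain ⟨D, hD, hDsup⟩ := hcb
  intro f₁ f₂ g₁ g₂ h₁₁ h₁₂ h₂₁ h₂₂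
  have hmeet : ∀ t, ∃ m, IsGLB {g₁.1 t, g₂.1 t} m := fun t => by
    obtain ⟨m, hm⟩ := (hM.directedOn_lowerBounds _ _).exists_isLUB_of_countable hsup hD
      (fun a => (hDsup a).imp fun _ hx => ⟨hx.1, hx.2.2⟩)
      ⟨f₁.1 t, mem_lowerBounds_pair.2 ⟨h₁₁ t, h₁₂ t⟩⟩
    exact ⟨m, isLUB_lowerBounds.1 hm⟩
  choose h hh using hmeet
  refine ⟨⟨h, isOpen_compactlyContained_of_isGLB
    (fun _ _ => CompactlyContained.exists_between hrapid) g₁.2 g₂.2 hh⟩,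
    fun t => (hh t).2 (mem_lowerBounds_pair.2 ⟨h₁₁ t, h₁₂ t⟩),
    fun t => (hh t).2 (mem_lowerBounds_pair.2 ⟨h₂₁ t, h₂₂ t⟩),
    fun t => (mem_lowerBounds_pair.1 (hh t).1).1, fun t => (mem_lowerBounds_pair.1 (hh t).1).2⟩

theorem stmt13 {M : Type*} [AddCommSemigroup M] [PartialOrder M]
    [CovariantClass M M (· + ·) (· ≤ ·)] (hCu : IsCuSemigroup M)
    (hcb : ∃ D : Set M, D.Countable ∧ ∀ a : M, ∃ x : ℕ → M, (∀ n, x n ∈ D) ∧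
      (∀ n, CompactlyContained (x n) (x (n + 1))) ∧ IsLUB (Set.range x) a)
    (hM : RieszInterpolation M)
    (X : Type*) [MetricSpace X] [CompactSpace X] (n : ℕ) (hdim : CoveringDimLE X n) :
    RieszInterpolation (LscFun X M) :=
  stmt13_general hCu hcb hM X n
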